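/- arXiv:2109.08009 — 2 statements merged into one kernel-verified Lean document; each statement's English description precedes it below -/
import Mathlib

section
/- (Quadratic majorization of the logistic loss.) For all real numbers v and v₀: -log(π(v)) ≤ -log(π(v₀)) - (1 - π(v₀))·(v - v₀) + (1/8)·(v - v₀)², where π(x) = exp(x)/(exp(x)+1) is the logistic function. Moreover equality holds at v = v₀. -/
/-!
The loss `ℓ = -log ∘ π` has `ℓ' = π - 1` and `ℓ'' = π (1 - π) ≤ 1/4`. Any `f` with `f'' ≤ M`
lies below its tangent parabola of curvature `M` at every point, because
`t ↦ M/2 (t - y)² - f t + f' y * t` is convex with a critical point, hence a minimum, at `y`.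
-/

/-- The logistic function π(x) = exp(x)/(exp(x)+1). -/
noncomputable def logistic (x : ℝ) : ℝ := Real.exp x / (Real.exp x + 1)

open Real Set

theorem le_add_deriv_mul_add_sq_of_deriv2_le {f f' f'' : ℝ → ℝ} {M : ℝ}
    (hf : ∀ x, HasDerivAt f (f' x) x) (hf' : ∀ x, HasDerivAt f' (f'' x) x)
    (hM : ∀ x, f'' x ≤ M) (x y : ℝ) :
    f x ≤ f y + f' y * (x - y) + M / 2 * (x - y) ^ 2 := by
  set φ : ℝ → ℝ := fun t ↦ M / 2 * (t - y) ^ 2 - f t + f' y * t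
  have hφ : ∀ t, HasDerivAt φ (M * (t - y) - f' t + f' y) t := fun t ↦ by
    refine (((((hasDerivAt_id' t).sub_const y).fun_pow 2).const_mul (M / 2)).fun_sub (hf t)
      |>.fun_add ((hasDerivAt_id' t).const_mul (f' y))).congr_deriv ?_
    ring
  have hφ' : ∀ t, HasDerivAt (fun t ↦ M * (t - y) - f' t + f' y) (M - f'' t) t := fun t ↦ by
    simpa using ((((hasDerivAt_id t).sub_const y).const_mul M).sub (hf' t)).add_const (f' y)
  have hconvex : ConvexOn ℝ univ φ :=
    convexOn_of_hasDerivWithinAt2_nonneg convex_univ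
      (fun t _ ↦ (hφ t).continuousAt.continuousWithinAt) (fun t _ ↦ (hφ t).hasDerivWithinAt)
      (fun t _ ↦ (hφ' t).hasDerivWithinAt) (fun t _ ↦ sub_nonneg.2 (hM t))
  have hmin : IsMinOn φ univ y := by
    refine hconvex.isMinOn_of_rightDeriv_eq_zero (by simp) ?_
    rw [(hφ y).hasDerivWithinAt.derivWithin (uniqueDiffWithinAt_Ioi y)]
    ring
  have : φ y ≤ φ x := hmin (mem_univ x)
  simp only [φ, sub_self] at this
  linarith

lemma mul_one_sub_le_one_div_four (a : ℝ) : a * (1 - a) ≤ 1 / 4 := by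
  nlinarith [sq_nonneg (a - 1 / 2)]

lemma logistic_eq_sigmoid : logistic = sigmoid := by
  funext x
  rw [logistic, sigmoid_def, exp_neg]
  field_simp

lemma hasDerivAt_neg_log_sigmoid (x : ℝ) :
    HasDerivAt (fun x ↦ -log (sigmoid x)) (sigmoid x - 1) x := by
  refine ((hasDerivAt_sigmoid x).log (sigmoid_pos x).ne').fun_neg.congr_deriv ?_
  field_simp [(sigmoid_pos x).ne']
  ring

/-- Quadratic majorization of the logistic loss:
-log(π(v)) ≤ -log(π(v₀)) - (1 - π(v₀))(v - v₀) + (1/8)(v - v₀)², with equality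
at v = v₀. -/
theorem logistic_loss_quadratic_majorization (v v₀ : ℝ) :
    -Real.log (logistic v) ≤
      -Real.log (logistic v₀) - (1 - logistic v₀) * (v - v₀)
        + (1 / 8) * (v - v₀) ^ 2 ∧
    (v = v₀ →
      -Real.log (logistic v) =
        -Real.log (logistic v₀) - (1 - logistic v₀) * (v - v₀)
          + (1 / 8) * (v - v₀) ^ 2) := by
  refine ⟨?_, fun h ↦ by subst h; ring⟩
  have h := le_add_deriv_mul_add_sq_of_deriv2_le hasDerivAt_neg_log_sigmoid
    (fun x ↦ (hasDerivAt_sigmoid x).sub_const 1) (fun x ↦ mul_one_sub_le_one_div_four _) v v₀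
  rw [logistic_eq_sigmoid]
  linarith
end

section
/- (MM majorization inequality used by the SLFPCA algorithm.) For all real numbers v and v₀: -log(π(v)) ≤ -log(π(v₀)) + (1/8)·(v - v₀ - 4·(1 - π(v₀)))², where π(x) = exp(x)/(exp(x)+1) is the logistic function. -/
/-!
The logistic loss `f = -log ∘ π` has `f' = π - 1` and `f'' = π (1 - π) ≤ 1/4`, so it lies below
its second-order Taylor polynomial at `v₀` with curvature `1/4`. Completing the square, that
polynomial is the right-hand side of the theorem minus `2 (1 - π(v₀))² ≥ 0`.
-/

open Set

lemma ConvexOn.add_mul_sub_le_of_hasDerivAt {S : Set ℝ} {f : ℝ → ℝ} {x y f' : ℝ}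
    (hf : ConvexOn ℝ S f) (hx : x ∈ S) (hy : y ∈ S) (hdf : HasDerivAt f f' x) :
    f x + f' * (y - x) ≤ f y := by
  rcases lt_trichotomy x y with hxy | rfl | hyx
  · have h := hf.le_slope_of_hasDerivAt hx hy hxy hdf
    rw [slope_def_field, le_div_iff₀ (sub_pos.2 hxy)] at h
    linarith
  · simp
  · have h := hf.slope_le_of_hasDerivAt hy hx hyx hdf
    rw [slope_def_field, div_le_iff₀ (sub_pos.2 hyx)] at h
    linarith

lemma le_add_mul_sub_add_sq_of_hasDerivAt2_le {f f' f'' : ℝ → ℝ} {M : ℝ}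
    (hf : ∀ x, HasDerivAt f (f' x) x) (hf' : ∀ x, HasDerivAt f' (f'' x) x)
    (hM : ∀ x, f'' x ≤ M) (x y : ℝ) :
    f y ≤ f x + f' x * (y - x) + M / 2 * (y - x) ^ 2 := by
  have hg : ∀ z, HasDerivAt (fun z => M / 2 * z ^ 2 - f z) (M * z - f' z) z := fun z => by
    refine (((hasDerivAt_pow 2 z).const_mul (M / 2)).fun_sub (hf z)).congr_deriv ?_
    norm_num
    ring
  have hg' : ∀ z, HasDerivAt (fun z => M * z - f' z) (M - f'' z) z := fun z => by
    simpa using ((hasDerivAt_id z).const_mul M).fun_sub (hf' z)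
  have hconvex : ConvexOn ℝ univ (fun z => M / 2 * z ^ 2 - f z) :=
    convexOn_of_hasDerivWithinAt2_nonneg convex_univ
      (fun z _ => (hg z).continuousAt.continuousWithinAt)
      (fun z _ => (hg z).hasDerivWithinAt) (fun z _ => (hg' z).hasDerivWithinAt)
      (fun z _ => sub_nonneg.2 (hM z))
  have h := hconvex.add_mul_sub_le_of_hasDerivAt (mem_univ x) (mem_univ y) (hg x)
  linear_combination h

lemma logistic_pos (x : ℝ) : 0 < logistic x := by
  unfold logistic
  positivity

lemma hasDerivAt_logistic (x : ℝ) :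
    HasDerivAt logistic (logistic x * (1 - logistic x)) x := by
  have hx : Real.exp x + 1 ≠ 0 := by positivity
  refine ((Real.hasDerivAt_exp x).div ((Real.hasDerivAt_exp x).add_const 1) hx).congr_deriv ?_
  simp only [logistic]
  field_simp

lemma hasDerivAt_neg_log_logistic (x : ℝ) :
    HasDerivAt (fun y => -Real.log (logistic y)) (logistic x - 1) x := by
  refine ((hasDerivAt_logistic x).log (logistic_pos x).ne').fun_neg.congr_deriv ?_
  field_simp [(logistic_pos x).ne']
  ring

/-- MM majorization inequality used by the SLFPCA algorithm:
-log(π(v)) ≤ -log(π(v₀)) + (1/8)(v - v₀ - 4(1 - π(v₀)))². -/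
theorem logistic_loss_mm_majorization (v v₀ : ℝ) :
    -Real.log (logistic v) ≤
      -Real.log (logistic v₀)
        + (1 / 8) * (v - v₀ - 4 * (1 - logistic v₀)) ^ 2 := by
  have htaylor := le_add_mul_sub_add_sq_of_hasDerivAt2_le (M := 1 / 4)
    hasDerivAt_neg_log_logistic (fun x => (hasDerivAt_logistic x).sub_const 1)
    (fun x => by nlinarith [sq_nonneg (logistic x - 1 / 2)]) v₀ v
  nlinarith [sq_nonneg (1 - logistic v₀)]
end
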